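/- arXiv:2504.17958 — 2 statements merged into one kernel-verified Lean document; each statement's English description precedes it below -/
import Mathlib

section
/- Sufficient condition for dissipativity (Proposition 3.2): suppose b and σ satisfy the standing assumptions and that there exists a constant γ such that ⟨b(x,μ,a) − b(x',μ,a), x − x'⟩ + (1/2)|σ(x,μ,a) − σ(x',μ,a)|² ≤ −γ|x − x'|² for all x, x' ∈ ℝ^d, μ ∈ P₂(ℝ^d), a ∈ A, and that η := γ − (L_{bμ} + L_{σx}·L_{σμ} + (1/2)·L_{σμ}²) > 0. Then for every a ∈ A and every pair of square-integrable ℝ^d-valued random variables ξ, ξ' one has E[⟨b(ξ,P_ξ,a) − b(ξ',P_{ξ'},a), ξ − ξ'⟩ + (1/2)|σ(ξ,P_ξ,a) − σ(ξ',P_{ξ'},a)|²] ≤ −η E[|ξ − ξ'|²]. -/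
open MeasureTheory ProbabilityTheory Filter Set
open scoped ENNReal NNReal Topology InnerProductSpace

noncomputable section

instance matMeasurableSpace {d m : ℕ} : MeasurableSpace (Matrix (Fin d) (Fin m) ℝ) :=
  MeasurableSpace.pi

/-- The state space `ℝ^d`. -/
abbrev Vec (d : ℕ) := EuclideanSpace ℝ (Fin d)

/-- Frobenius norm of a `d × m` matrix: `|σ| = (tr (σ σᵀ))^{1/2}`. -/
def matNorm {d m : ℕ} (σ : Matrix (Fin d) (Fin m) ℝ) : ℝ :=
  Real.sqrt (∑ i, ∑ j, (σ i j) ^ 2)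

/-- Second moment of a measure on `ℝ^d`. -/
def secondMoment {d : ℕ} (μ : Measure (Vec d)) : ℝ≥0∞ := ∫⁻ x, (‖x‖₊ : ℝ≥0∞) ^ 2 ∂μ

/-- Membership in the Wasserstein space `P₂(ℝ^d)`: Borel probability measures with
finite second moment. -/
def MemP2 {d : ℕ} (μ : Measure (Vec d)) : Prop :=
  IsProbabilityMeasure μ ∧ secondMoment μ < ⊤

/-- `π` is a coupling of `μ` and `ν`. -/
def IsCoupling {d : ℕ} (π : Measure (Vec d × Vec d)) (μ ν : Measure (Vec d)) : Prop :=
  π.map Prod.fst = μ ∧ π.map Prod.snd = ν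

/-- Squared 2-Wasserstein distance. -/
def W2sq {d : ℕ} (μ ν : Measure (Vec d)) : ℝ≥0∞ :=
  ⨅ (π : Measure (Vec d × Vec d)) (_ : IsCoupling π μ ν), ∫⁻ p, (‖p.1 - p.2‖₊ : ℝ≥0∞) ^ 2 ∂π

/-- The 2-Wasserstein distance `W₂`. -/
def W2 {d : ℕ} (μ ν : Measure (Vec d)) : ℝ := Real.sqrt (W2sq μ ν).toReal

/-- A set of measures is (sequentially) compact for the `W₂` distance. -/
def W2SeqCompact {d : ℕ} (K : Set (Measure (Vec d))) : Prop :=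
  (∀ μ ∈ K, MemP2 μ) ∧
  ∀ u : ℕ → Measure (Vec d), (∀ n, u n ∈ K) →
    ∃ (ν : Measure (Vec d)) (φ : ℕ → ℕ), ν ∈ K ∧ StrictMono φ ∧
      Tendsto (fun n => W2 (u (φ n)) ν) atTop (𝓝 0)

/-- `B` is an `m`-dimensional Brownian motion on `(Ω, F, P)` adapted to the filtration `F`. -/
structure IsBM {Ω : Type*} {m0 : MeasurableSpace Ω} (P : Measure Ω)
    (F : Filtration ℝ m0) {m : ℕ} (B : ℝ → Ω → (Fin m → ℝ)) : Prop where
  init : ∀ᵐ ω ∂P, B 0 ω = 0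
  contPaths : ∀ᵐ ω ∂P, Continuous fun t => B t ω
  adapted : ∀ t : ℝ, StronglyMeasurable[F t] (B t)
  indepIncr : ∀ s t : ℝ, 0 ≤ s → s ≤ t →
    Indep (MeasurableSpace.comap (fun ω => B t ω - B s ω) inferInstance) (F s) P
  gaussIncr : ∀ s t : ℝ, 0 ≤ s → s ≤ t → ∀ j : Fin m,
    P.map (fun ω => B t ω j - B s ω j) = gaussianReal 0 ((t - s).toNNReal)
  coordIndep : ∀ s t : ℝ, 0 ≤ s → s ≤ t →
    iIndepFun (fun j ω => B t ω j - B s ω j) P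

/-- The law `P_ξ` of a random variable `ξ`. -/
def law {Ω : Type*} {m0 : MeasurableSpace Ω} (P : Measure Ω) {d : ℕ}
    (ξ : Ω → Vec d) : Measure (Vec d) :=
  P.map ξ

/-- `i`-th vector of the canonical basis of `ℝ^d`. -/
def esingle {d : ℕ} (i : Fin d) : Vec d := EuclideanSpace.single i (1 : ℝ)

/-- The generator of the controlled McKean-Vlasov dynamics applied to a test function `φ`:
`L φ(x,μ,a) = ⟨b(x,μ,a), ∇φ(x)⟩ + ½ tr(σσᵀ(x,μ,a) ∇²φ(x))`. -/
def gen {d m : ℕ} {A : Type*} (b : Vec d → Measure (Vec d) → A → Vec d)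
    (σ : Vec d → Measure (Vec d) → A → Matrix (Fin d) (Fin m) ℝ)
    (φ : Vec d → ℝ) (x : Vec d) (μ : Measure (Vec d)) (a : A) : ℝ :=
  fderiv ℝ φ x (b x μ a)
    + (1 / 2) * ∑ i : Fin d, ∑ j : Fin d,
        (∑ k : Fin m, σ x μ a i k * σ x μ a j k) *
          (fderiv ℝ (fun y => fderiv ℝ φ y (esingle j)) x (esingle i))

/-- Test functions for the martingale-problem formulation: `C²` with bounded
function, gradient and Hessian. -/
def IsTestCb2 {d : ℕ} (φ : Vec d → ℝ) : Prop :=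
  ContDiff ℝ 2 φ ∧ ∃ C : ℝ, ∀ x, |φ x| ≤ C ∧ ‖fderiv ℝ φ x‖ ≤ C ∧
    ‖fderiv ℝ (fderiv ℝ φ) x‖ ≤ C

/-- `X` is a solution on `[t,T]` of the controlled McKean-Vlasov equation
`dX_s = b(X_s, P_{X_s}, α_s) ds + σ(X_s, P_{X_s}, α_s) dB_s`, `X_t = ξ`
(martingale-problem formulation): `X` is continuous, adapted, square integrable,
starts from `ξ`, and for every test function `φ` the process
`φ(X_s) - ∫_t^s Lφ(X_r, P_{X_r}, α_r) dr` is a martingale on `[t,T]`. -/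
structure IsSol {Ω : Type*} {m0 : MeasurableSpace Ω} (P : Measure Ω)
    (F : Filtration ℝ m0) {d m : ℕ} {A : Type*}
    (b : Vec d → Measure (Vec d) → A → Vec d)
    (σ : Vec d → Measure (Vec d) → A → Matrix (Fin d) (Fin m) ℝ)
    (t T : ℝ) (ξ : Ω → Vec d) (α : ℝ → Ω → A) (X : ℝ → Ω → Vec d) : Prop where
  contPaths : ∀ᵐ ω ∂P, ContinuousOn (fun s => X s ω) (Icc t T)
  adapted : ∀ s ∈ Icc t T, StronglyMeasurable[F s] (X s)
  init : X t =ᵐ[P] ξ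
  sqInt : ∀ s ∈ Icc t T, MemLp (X s) 2 P
  mpInt : ∀ φ : Vec d → ℝ, IsTestCb2 φ → ∀ s ∈ Icc t T,
    Integrable (fun ω => φ (X s ω)
      - ∫ r in t..s, gen b σ φ (X r ω) (P.map (X r)) (α r ω)) P
  mart : ∀ φ : Vec d → ℝ, IsTestCb2 φ → ∀ s₁ ∈ Icc t T, ∀ s₂ ∈ Icc t T, s₁ ≤ s₂ →
    P[(fun ω => φ (X s₂ ω) - ∫ r in t..s₂, gen b σ φ (X r ω) (P.map (X r)) (α r ω)) | F s₁]
      =ᵐ[P] fun ω => φ (X s₁ ω) - ∫ r in t..s₁, gen b σ φ (X r ω) (P.map (X r)) (α r ω)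

/-- Admissible controls: progressively measurable `A`-valued processes. -/
def IsAdmissible {Ω : Type*} {m0 : MeasurableSpace Ω} (F : Filtration ℝ m0)
    {A : Type*} [TopologicalSpace A] (α : ℝ → Ω → A) : Prop :=
  ProgMeasurable F α

/-- Standing assumptions on the coefficients `b` and `σ` (Assumptions 2.1). -/
structure StandingCoeffs {d m : ℕ} {A : Type*} [MeasurableSpace A] [TopologicalSpace A]
    (b : Vec d → Measure (Vec d) → A → Vec d)
    (σ : Vec d → Measure (Vec d) → A → Matrix (Fin d) (Fin m) ℝ)
    (Lbx Lbμ Lσx Lσμ M : ℝ) : Prop where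
  measb : Measurable fun p : Vec d × Measure (Vec d) × A => b p.1 p.2.1 p.2.2
  meass : Measurable fun p : Vec d × Measure (Vec d) × A => σ p.1 p.2.1 p.2.2
  lipbx : ∀ x x' μ a, MemP2 μ → ‖b x μ a - b x' μ a‖ ≤ Lbx * ‖x - x'‖
  lipbμ : ∀ x μ μ' a, MemP2 μ → MemP2 μ' → ‖b x μ a - b x μ' a‖ ≤ Lbμ * W2 μ μ'
  lipσx : ∀ x x' μ a, MemP2 μ → matNorm (σ x μ a - σ x' μ a) ≤ Lσx * ‖x - x'‖
  lipσμ : ∀ x μ μ' a, MemP2 μ → MemP2 μ' → matNorm (σ x μ a - σ x μ' a) ≤ Lσμ * W2 μ μ'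
  growth : ∀ a, ‖b 0 (Measure.dirac 0) a‖ + matNorm (σ 0 (Measure.dirac 0) a) ≤ M
  contb : ∀ x μ, MemP2 μ → Continuous fun a => b x μ a
  contσ : ∀ x μ, MemP2 μ → Continuous fun a => σ x μ a

/-- The dissipativity assumption (Assumptions 3.1) with constant `η > 0`. -/
def Dissipative {Ω : Type*} {m0 : MeasurableSpace Ω} (P : Measure Ω) {d m : ℕ} {A : Type*}
    (b : Vec d → Measure (Vec d) → A → Vec d)
    (σ : Vec d → Measure (Vec d) → A → Matrix (Fin d) (Fin m) ℝ) (η : ℝ) : Prop :=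
  0 < η ∧ ∀ a : A, ∀ ξ ξ' : Ω → Vec d, MemLp ξ 2 P → MemLp ξ' 2 P →
    (∫ ω, (⟪b (ξ ω) (P.map ξ) a - b (ξ' ω) (P.map ξ') a, ξ ω - ξ' ω⟫_ℝ
        + (1 / 2) * matNorm (σ (ξ ω) (P.map ξ) a - σ (ξ' ω) (P.map ξ') a) ^ 2) ∂P)
      ≤ -η * ∫ ω, ‖ξ ω - ξ' ω‖ ^ 2 ∂P

/-- Standing assumptions on the running reward `f` (Assumptions 4.1). -/
structure RewardAssumptions {d : ℕ} {A : Type*} [MeasurableSpace A] [TopologicalSpace A]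
    (f : Vec d → Measure (Vec d) → A → ℝ) (Mf Lf : ℝ) : Prop where
  meas : Measurable fun p : Vec d × Measure (Vec d) × A => f p.1 p.2.1 p.2.2
  bound : ∀ x μ a, MemP2 μ → |f x μ a| ≤ Mf
  lip : ∀ x x' μ μ' a, MemP2 μ → MemP2 μ' →
    |f x μ a - f x' μ' a| ≤ Lf * (‖x - x'‖ + W2 μ μ')
  conta : ∀ x μ, MemP2 μ → Continuous fun a => f x μ a

/-! Split `b(ξ,μ,a) - b(ξ',μ',a)` as `(b(ξ,μ,a) - b(ξ',μ,a)) + (b(ξ',μ,a) - b(ξ',μ',a))`, and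
likewise for `σ`. The first parts are controlled by the pointwise one-sided condition at the fixed
measure `μ = P_ξ`, the second ones by the Lipschitz continuity in the measure together with
`W₂(P_ξ, P_ξ')² ≤ E|ξ - ξ'|²`, which comes from the coupling `(ξ, ξ')`. Young's inequality absorbs
the cross terms `W₂(P_ξ, P_ξ') |ξ - ξ'|`; this needs the Lipschitz constants to be nonnegative,
which for `d > 0` follows by testing them on Dirac masses, while for `d = 0` everything vanishes. -/

section MatNorm

variable {d m : ℕ}

attribute [local instance] Matrix.frobeniusNormedAddCommGroup in
lemma matNorm_eq_frobenius_norm (X : Matrix (Fin d) (Fin m) ℝ) : matNorm X = ‖X‖ := by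
  simp only [matNorm, Matrix.frobenius_norm_def, Real.sqrt_eq_rpow, Real.rpow_two,
    Real.norm_eq_abs, sq_abs]

lemma matNorm_nonneg (X : Matrix (Fin d) (Fin m) ℝ) : 0 ≤ matNorm X :=
  Real.sqrt_nonneg _

attribute [local instance] Matrix.frobeniusNormedAddCommGroup in
lemma matNorm_add_le (X Y : Matrix (Fin d) (Fin m) ℝ) :
    matNorm (X + Y) ≤ matNorm X + matNorm Y := by
  simpa only [matNorm_eq_frobenius_norm] using norm_add_le X Y

lemma measurable_matNorm_sub :
    Measurable fun p : Matrix (Fin d) (Fin m) ℝ × Matrix (Fin d) (Fin m) ℝ =>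
      matNorm (p.1 - p.2) := by
  simp only [matNorm, Matrix.sub_apply]
  fun_prop

end MatNorm

section Wasserstein

variable {d : ℕ}

lemma memP2_dirac (x : Vec d) : MemP2 (Measure.dirac x) :=
  ⟨inferInstance, by simp [secondMoment]⟩

lemma W2sq_dirac_dirac (x y : Vec d) :
    W2sq (Measure.dirac x) (Measure.dirac y) = (‖x - y‖₊ : ℝ≥0∞) ^ 2 := by
  refine le_antisymm ?_ (le_iInf₂ fun π hπ => ?_)
  · refine iInf₂_le_of_le (Measure.dirac (x, y))
      ⟨Measure.map_dirac' measurable_fst _, Measure.map_dirac' measurable_snd _⟩ ?_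
    simp
  · have hfst : ∀ᵐ p ∂π, p.1 = x := ae_of_ae_map measurable_fst.aemeasurable
      (hπ.1 ▸ (ae_dirac_iff (measurableSet_singleton x)).2 rfl)
    have hsnd : ∀ᵐ p ∂π, p.2 = y := ae_of_ae_map measurable_snd.aemeasurable
      (hπ.2 ▸ (ae_dirac_iff (measurableSet_singleton y)).2 rfl)
    have huniv : π univ = 1 := by
      rw [← Set.preimage_univ (f := Prod.fst), ← Measure.map_apply measurable_fst .univ, hπ.1,
        measure_univ]
    have hconst : (fun p : Vec d × Vec d => (‖p.1 - p.2‖₊ : ℝ≥0∞) ^ 2)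
        =ᵐ[π] fun _ => (‖x - y‖₊ : ℝ≥0∞) ^ 2 := by
      filter_upwards [hfst, hsnd] with p h1 h2
      rw [h1, h2]
    rw [lintegral_congr_ae hconst, lintegral_const, huniv, mul_one]

lemma W2_dirac_dirac (x y : Vec d) : W2 (Measure.dirac x) (Measure.dirac y) = ‖x - y‖ := by
  simp [W2, W2sq_dirac_dirac, ENNReal.toReal_pow]

end Wasserstein

section Law

variable {Ω : Type*} {m0 : MeasurableSpace Ω} {P : Measure Ω} {d : ℕ}

lemma lintegral_nnnorm_sq_eq_ofReal_integral {E : Type*} [NormedAddCommGroup E] {f : Ω → E}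
    (hf : MemLp f 2 P) :
    ∫⁻ ω, (‖f ω‖₊ : ℝ≥0∞) ^ 2 ∂P = ENNReal.ofReal (∫ ω, ‖f ω‖ ^ 2 ∂P) := by
  rw [ofReal_integral_eq_lintegral_ofReal (hf.integrable_norm_pow two_ne_zero)
    (ae_of_all _ fun ω => sq_nonneg _)]
  simp_rw [ENNReal.ofReal_pow (norm_nonneg _), ofReal_norm, enorm_eq_nnnorm]

lemma memP2_law [IsProbabilityMeasure P] {ξ : Ω → Vec d} (hξ : MemLp ξ 2 P) :
    MemP2 (law P ξ) := by
  have hξm := hξ.aestronglyMeasurable.aemeasurable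
  refine ⟨Measure.isProbabilityMeasure_map hξm, ?_⟩
  rw [law, secondMoment, lintegral_map' (by fun_prop) hξm,
    lintegral_nnnorm_sq_eq_ofReal_integral hξ]
  exact ENNReal.ofReal_lt_top

lemma sq_W2_law_le {ξ ξ' : Ω → Vec d} (hξ : MemLp ξ 2 P) (hξ' : MemLp ξ' 2 P) :
    W2 (law P ξ) (law P ξ') ^ 2 ≤ ∫ ω, ‖ξ ω - ξ' ω‖ ^ 2 ∂P := by
  have hpair : AEMeasurable (fun ω => (ξ ω, ξ' ω)) P :=
    hξ.aestronglyMeasurable.aemeasurable.prodMk hξ'.aestronglyMeasurable.aemeasurable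
  have hcoupling : IsCoupling (P.map fun ω => (ξ ω, ξ' ω)) (law P ξ) (law P ξ') :=
    ⟨AEMeasurable.map_map_of_aemeasurable measurable_fst.aemeasurable hpair,
     AEMeasurable.map_map_of_aemeasurable measurable_snd.aemeasurable hpair⟩
  have hW2sq : W2sq (law P ξ) (law P ξ') ≤ ENNReal.ofReal (∫ ω, ‖ξ ω - ξ' ω‖ ^ 2 ∂P) :=
    calc W2sq (law P ξ) (law P ξ')
        ≤ ∫⁻ p, (‖p.1 - p.2‖₊ : ℝ≥0∞) ^ 2 ∂(P.map fun ω => (ξ ω, ξ' ω)) :=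
          iInf₂_le_of_le _ hcoupling le_rfl
      _ = ∫⁻ ω, (‖ξ ω - ξ' ω‖₊ : ℝ≥0∞) ^ 2 ∂P := lintegral_map' (by fun_prop) hpair
      _ = _ := lintegral_nnnorm_sq_eq_ofReal_integral (hξ.sub hξ')
  rw [W2, Real.sq_sqrt ENNReal.toReal_nonneg]
  exact ENNReal.toReal_le_of_le_ofReal (integral_nonneg fun ω => sq_nonneg _) hW2sq

end Law

lemma inner_add_add_half_matNorm_sq_le {E : Type*} [NormedAddCommGroup E] [InnerProductSpace ℝ E]
    {d m : ℕ} (u v w : E) (X Y : Matrix (Fin d) (Fin m) ℝ) :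
    ⟪u + v, w⟫_ℝ + 1 / 2 * matNorm (X + Y) ^ 2
      ≤ (⟪u, w⟫_ℝ + 1 / 2 * matNorm X ^ 2) + ‖v‖ * ‖w‖ + matNorm X * matNorm Y
        + 1 / 2 * matNorm Y ^ 2 := by
  have hsq : matNorm (X + Y) ^ 2 ≤ (matNorm X + matNorm Y) ^ 2 :=
    pow_le_pow_left₀ (matNorm_nonneg _) (matNorm_add_le X Y) 2
  rw [inner_add_left]
  nlinarith [real_inner_le_norm v w]

lemma integrable_of_abs_le_quadratic {Ω E : Type*} {m0 : MeasurableSpace Ω} {P : Measure Ω}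
    [IsFiniteMeasure P] [NormedAddCommGroup E] {g : Ω → E} (hg : MemLp g 2 P) {f : Ω → ℝ}
    (hf : AEStronglyMeasurable f P) {α β c : ℝ}
    (hfg : ∀ ω, |f ω| ≤ α * ‖g ω‖ ^ 2 + β * ‖g ω‖ + c) : Integrable f P := by
  have hbound : Integrable (fun ω => α * ‖g ω‖ ^ 2 + β * ‖g ω‖ + c) P :=
    (((hg.integrable_norm_pow two_ne_zero).const_mul α).add
      ((hg.integrable one_le_two).norm.const_mul β)).add (integrable_const c)
  exact hbound.mono' hf (ae_of_all _ hfg)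

section Dissipation

variable {Ω : Type*} {m0 : MeasurableSpace Ω} {P : Measure Ω}
  {d m : ℕ} {A : Type*} [MeasurableSpace A] [TopologicalSpace A]
  {b : Vec d → Measure (Vec d) → A → Vec d}
  {σ : Vec d → Measure (Vec d) → A → Matrix (Fin d) (Fin m) ℝ}
  {Lbx Lbμ Lσx Lσμ M : ℝ}

def dissipation (b : Vec d → Measure (Vec d) → A → Vec d)
    (σ : Vec d → Measure (Vec d) → A → Matrix (Fin d) (Fin m) ℝ) (a : A)
    (x : Vec d) (μ : Measure (Vec d)) (x' : Vec d) (μ' : Measure (Vec d)) : ℝ :=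
  ⟪b x μ a - b x' μ' a, x - x'⟫_ℝ + 1 / 2 * matNorm (σ x μ a - σ x' μ' a) ^ 2

namespace StandingCoeffs

variable (hcoef : StandingCoeffs b σ Lbx Lbμ Lσx Lσμ M)
include hcoef

lemma Lbμ_nonneg [NeZero d] [Nonempty A] : 0 ≤ Lbμ := by
  obtain ⟨e, he⟩ := exists_norm_eq (Vec d) zero_le_one
  have h := hcoef.lipbμ 0 _ _ (Classical.arbitrary A) (memP2_dirac 0) (memP2_dirac e)
  rw [W2_dirac_dirac, zero_sub, norm_neg, he, mul_one] at h
  exact (norm_nonneg _).trans h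

lemma Lσμ_nonneg [NeZero d] [Nonempty A] : 0 ≤ Lσμ := by
  obtain ⟨e, he⟩ := exists_norm_eq (Vec d) zero_le_one
  have h := hcoef.lipσμ 0 _ _ (Classical.arbitrary A) (memP2_dirac 0) (memP2_dirac e)
  rw [W2_dirac_dirac, zero_sub, norm_neg, he, mul_one] at h
  exact (matNorm_nonneg _).trans h

lemma Lσx_nonneg [NeZero d] [Nonempty A] : 0 ≤ Lσx := by
  obtain ⟨e, he⟩ := exists_norm_eq (Vec d) zero_le_one
  have h := hcoef.lipσx e 0 _ (Classical.arbitrary A) (memP2_dirac 0)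
  rw [sub_zero, he, mul_one] at h
  exact (matNorm_nonneg _).trans h

variable {x x' : Vec d} {μ μ' : Measure (Vec d)} {a : A}

lemma norm_b_sub_le (hμ : MemP2 μ) (hμ' : MemP2 μ') :
    ‖b x μ a - b x' μ' a‖ ≤ Lbx * ‖x - x'‖ + Lbμ * W2 μ μ' :=
  (norm_sub_le_norm_sub_add_norm_sub _ (b x' μ a) _).trans
    (add_le_add (hcoef.lipbx x x' μ a hμ) (hcoef.lipbμ x' μ μ' a hμ hμ'))

lemma matNorm_σ_sub_le (hμ : MemP2 μ) (hμ' : MemP2 μ') :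
    matNorm (σ x μ a - σ x' μ' a) ≤ Lσx * ‖x - x'‖ + Lσμ * W2 μ μ' := by
  simpa only [sub_add_sub_cancel] using
    (matNorm_add_le (σ x μ a - σ x' μ a) (σ x' μ a - σ x' μ' a)).trans
      (add_le_add (hcoef.lipσx x x' μ a hμ) (hcoef.lipσμ x' μ μ' a hμ hμ'))

lemma abs_dissipation_le (hμ : MemP2 μ) (hμ' : MemP2 μ') :
    |dissipation b σ a x μ x' μ'|
      ≤ (Lbx + 1 / 2 * Lσx ^ 2) * ‖x - x'‖ ^ 2 + (Lbμ + Lσx * Lσμ) * W2 μ μ' * ‖x - x'‖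
        + 1 / 2 * Lσμ ^ 2 * W2 μ μ' ^ 2 := by
  have hinner : |⟪b x μ a - b x' μ' a, x - x'⟫_ℝ|
      ≤ (Lbx * ‖x - x'‖ + Lbμ * W2 μ μ') * ‖x - x'‖ :=
    (abs_real_inner_le_norm _ _).trans
      (mul_le_mul_of_nonneg_right (hcoef.norm_b_sub_le hμ hμ') (norm_nonneg _))
  have hσ : matNorm (σ x μ a - σ x' μ' a) ^ 2 ≤ (Lσx * ‖x - x'‖ + Lσμ * W2 μ μ') ^ 2 :=
    pow_le_pow_left₀ (matNorm_nonneg _) (hcoef.matNorm_σ_sub_le hμ hμ') 2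
  rw [dissipation, abs_le]
  constructor <;> nlinarith [abs_le.1 hinner, sq_nonneg (matNorm (σ x μ a - σ x' μ' a))]

lemma dissipation_le {γ : ℝ}
    (hpoint : ∀ x x' μ, MemP2 μ → dissipation b σ a x μ x' μ ≤ -γ * ‖x - x'‖ ^ 2)
    (hμ : MemP2 μ) (hμ' : MemP2 μ') :
    dissipation b σ a x μ x' μ'
      ≤ -γ * ‖x - x'‖ ^ 2 + (Lbμ + Lσx * Lσμ) * W2 μ μ' * ‖x - x'‖
        + 1 / 2 * Lσμ ^ 2 * W2 μ μ' ^ 2 := by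
  have hsplit := inner_add_add_half_matNorm_sq_le (b x μ a - b x' μ a) (b x' μ a - b x' μ' a)
    (x - x') (σ x μ a - σ x' μ a) (σ x' μ a - σ x' μ' a)
  simp only [sub_add_sub_cancel] at hsplit
  have hb := mul_le_mul_of_nonneg_right (hcoef.lipbμ x' μ μ' a hμ hμ') (norm_nonneg (x - x'))
  have hσx := hcoef.lipσx x x' μ a hμ
  have hσμ := hcoef.lipσμ x' μ μ' a hμ hμ'
  have hσ := mul_le_mul hσx hσμ (matNorm_nonneg _) ((matNorm_nonneg _).trans hσx)
  have hσμsq := pow_le_pow_left₀ (matNorm_nonneg _) hσμ 2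
  have hfixed := hpoint x x' μ hμ
  unfold dissipation at hfixed ⊢
  nlinarith

lemma aestronglyMeasurable_dissipation {ξ ξ' : Ω → Vec d} (hξ : AEMeasurable ξ P)
    (hξ' : AEMeasurable ξ' P) (a : A) (μ μ' : Measure (Vec d)) :
    AEStronglyMeasurable (fun ω => dissipation b σ a (ξ ω) μ (ξ' ω) μ') P := by
  have hb : ∀ ν, Measurable fun x => b x ν a := fun ν =>
    hcoef.measb.comp (measurable_id.prodMk (measurable_const (a := (ν, a))))
  have hσ : ∀ ν, Measurable fun x => σ x ν a := fun ν =>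
    hcoef.meass.comp (measurable_id.prodMk (measurable_const (a := (ν, a))))
  have hbξ := ((hb μ).comp_aemeasurable hξ).sub ((hb μ').comp_aemeasurable hξ')
  have hσξ := ((hσ μ).comp_aemeasurable hξ).prodMk ((hσ μ').comp_aemeasurable hξ')
  refine ((hbξ.inner (hξ.sub hξ')).add ?_).aestronglyMeasurable
  exact ((measurable_matNorm_sub.comp_aemeasurable hσξ).pow_const 2).const_mul _

lemma integral_dissipation_le [IsProbabilityMeasure P] {γ : ℝ} {a : A}
    (hpoint : ∀ x x' μ, MemP2 μ → dissipation b σ a x μ x' μ ≤ -γ * ‖x - x'‖ ^ 2)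
    (hK : 0 ≤ Lbμ + Lσx * Lσμ) {ξ ξ' : Ω → Vec d} (hξ : MemLp ξ 2 P) (hξ' : MemLp ξ' 2 P) :
    ∫ ω, dissipation b σ a (ξ ω) (law P ξ) (ξ' ω) (law P ξ') ∂P
      ≤ -(γ - (Lbμ + Lσx * Lσμ + 1 / 2 * Lσμ ^ 2)) * ∫ ω, ‖ξ ω - ξ' ω‖ ^ 2 ∂P := by
  set K := Lbμ + Lσx * Lσμ
  set W := W2 (law P ξ) (law P ξ')
  have hμ := memP2_law hξ
  have hμ' := memP2_law hξ'
  have hW : W ^ 2 ≤ ∫ ω, ‖ξ ω - ξ' ω‖ ^ 2 ∂P := sq_W2_law_le hξ hξ'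
  have hΔ : MemLp (fun ω => ξ ω - ξ' ω) 2 P := hξ.sub hξ'
  have hbound : ∀ ω, dissipation b σ a (ξ ω) (law P ξ) (ξ' ω) (law P ξ')
      ≤ (-γ + K / 2) * ‖ξ ω - ξ' ω‖ ^ 2 + (K / 2 + 1 / 2 * Lσμ ^ 2) * W ^ 2 := fun ω =>
    (hcoef.dissipation_le hpoint hμ hμ').trans
      (by nlinarith [mul_le_mul_of_nonneg_left (two_mul_le_add_sq W ‖ξ ω - ξ' ω‖) hK])
  have hint : Integrable (fun ω => dissipation b σ a (ξ ω) (law P ξ) (ξ' ω) (law P ξ')) P :=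
    integrable_of_abs_le_quadratic hΔ
      (hcoef.aestronglyMeasurable_dissipation hξ.aestronglyMeasurable.aemeasurable
        hξ'.aestronglyMeasurable.aemeasurable a _ _)
      (fun ω => hcoef.abs_dissipation_le hμ hμ')
  calc ∫ ω, dissipation b σ a (ξ ω) (law P ξ) (ξ' ω) (law P ξ') ∂P
      ≤ ∫ ω, ((-γ + K / 2) * ‖ξ ω - ξ' ω‖ ^ 2 + (K / 2 + 1 / 2 * Lσμ ^ 2) * W ^ 2) ∂P :=
        integral_mono hint
          (((hΔ.integrable_norm_pow two_ne_zero).const_mul _).add (integrable_const _)) hbound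
    _ = (-γ + K / 2) * ∫ ω, ‖ξ ω - ξ' ω‖ ^ 2 ∂P + (K / 2 + 1 / 2 * Lσμ ^ 2) * W ^ 2 := by
        rw [integral_add ((hΔ.integrable_norm_pow two_ne_zero).const_mul _) (integrable_const _),
          integral_const_mul, integral_const, probReal_univ, one_smul]
    _ ≤ _ := by
        have hc : 0 ≤ K / 2 + 1 / 2 * Lσμ ^ 2 := by positivity
        nlinarith [mul_le_mul_of_nonneg_left hW hc]

end StandingCoeffs

end Dissipation

theorem sufficient_condition_dissipativity_general
    {Ω : Type*} {m0 : MeasurableSpace Ω} (P : Measure Ω) [IsProbabilityMeasure P]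
    {d m : ℕ} {A : Type*} [MeasurableSpace A] [TopologicalSpace A]
    (b : Vec d → Measure (Vec d) → A → Vec d)
    (σ : Vec d → Measure (Vec d) → A → Matrix (Fin d) (Fin m) ℝ)
    (Lbx Lbμ Lσx Lσμ M : ℝ) (hcoef : StandingCoeffs b σ Lbx Lbμ Lσx Lσμ M)
    (γ η : ℝ)
    (hpoint : ∀ (x x' : Vec d) (μ : Measure (Vec d)) (a : A), MemP2 μ →
      ⟪b x μ a - b x' μ a, x - x'⟫_ℝ + (1 / 2) * matNorm (σ x μ a - σ x' μ a) ^ 2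
        ≤ -γ * ‖x - x'‖ ^ 2)
    (hη : η = γ - (Lbμ + Lσx * Lσμ + (1 / 2) * Lσμ ^ 2))
    :
    ∀ a : A, ∀ ξ ξ' : Ω → Vec d, MemLp ξ 2 P → MemLp ξ' 2 P →
      (∫ ω, (⟪b (ξ ω) (law P ξ) a - b (ξ' ω) (law P ξ') a, ξ ω - ξ' ω⟫_ℝ
          + (1 / 2) * matNorm (σ (ξ ω) (law P ξ) a - σ (ξ' ω) (law P ξ') a) ^ 2) ∂P)
        ≤ -η * ∫ ω, ‖ξ ω - ξ' ω‖ ^ 2 ∂P := by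
  intro a ξ ξ' hξ hξ'
  rcases eq_or_ne d 0 with rfl | hd
  · have hΔ : ∀ ω, ξ ω - ξ' ω = 0 := fun ω => Subsingleton.elim _ _
    simp [hΔ, matNorm]
  have : NeZero d := ⟨hd⟩
  have : Nonempty A := ⟨a⟩
  have hK : 0 ≤ Lbμ + Lσx * Lσμ :=
    add_nonneg hcoef.Lbμ_nonneg (mul_nonneg hcoef.Lσx_nonneg hcoef.Lσμ_nonneg)
  rw [hη]
  exact hcoef.integral_dissipation_le (fun x x' μ hμ => hpoint x x' μ a hμ) hK hξ hξ'

theorem sufficient_condition_dissipativity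
    {Ω : Type*} {m0 : MeasurableSpace Ω} (P : Measure Ω) [IsProbabilityMeasure P]
    {d m : ℕ} {A : Type*} [MeasurableSpace A] [TopologicalSpace A] [PolishSpace A]
    [BorelSpace A]
    (b : Vec d → Measure (Vec d) → A → Vec d)
    (σ : Vec d → Measure (Vec d) → A → Matrix (Fin d) (Fin m) ℝ)
    (Lbx Lbμ Lσx Lσμ M : ℝ) (hcoef : StandingCoeffs b σ Lbx Lbμ Lσx Lσμ M)
    (γ η : ℝ)
    (hpoint : ∀ (x x' : Vec d) (μ : Measure (Vec d)) (a : A), MemP2 μ →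
      ⟪b x μ a - b x' μ a, x - x'⟫_ℝ + (1 / 2) * matNorm (σ x μ a - σ x' μ a) ^ 2
        ≤ -γ * ‖x - x'‖ ^ 2)
    (hη : η = γ - (Lbμ + Lσx * Lσμ + (1 / 2) * Lσμ ^ 2)) (hηpos : 0 < η)
    :
    ∀ a : A, ∀ ξ ξ' : Ω → Vec d, MemLp ξ 2 P → MemLp ξ' 2 P →
      (∫ ω, (⟪b (ξ ω) (law P ξ) a - b (ξ' ω) (law P ξ') a, ξ ω - ξ' ω⟫_ℝ
          + (1 / 2) * matNorm (σ (ξ ω) (law P ξ) a - σ (ξ' ω) (law P ξ') a) ^ 2) ∂P)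
        ≤ -η * ∫ ω, ‖ξ ω - ξ' ω‖ ^ 2 ∂P :=
  sufficient_condition_dissipativity_general (m0 := m0) P b σ Lbx Lbμ Lσx Lσμ M hcoef γ η hpoint hη

end
end

section
/- Vanishing discount construction of the pair (λ, φ): under the standing assumptions on b, σ, f and the dissipativity assumption, there exist a sequence β_n → 0, a real number λ and a function φ: P₂(ℝ^d) → ℝ such that β_n v^{β_n}(δ₀) → λ, v^{β_n}(μ) − v^{β_n}(δ₀) → φ(μ) as n → ∞ uniformly for μ in every compact subset of P₂(ℝ^d), and φ satisfies |φ(μ)| ≤ L · W₂(μ, δ₀) and |φ(μ) − φ(ν)| ≤ L · W₂(μ, ν) for all μ, ν ∈ P₂(ℝ^d), where L is the uniform Lipschitz constant of the family (v^β)_{β>0}. -/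
open MeasureTheory ProbabilityTheory Filter Set
open scoped ENNReal NNReal Topology InnerProductSpace

noncomputable section

/-- Discounted infinite-horizon expected reward
`J_β(ξ,α) = E[∫₀^∞ e^{-βt} f(X_t, P_{X_t}, α_t) dt]`, written for the solution process `X`. -/
def discJ {Ω : Type*} {m0 : MeasurableSpace Ω} (P : Measure Ω) {d : ℕ} {A : Type*}
    (f : Vec d → Measure (Vec d) → A → ℝ) (β : ℝ)
    (X : ℝ → Ω → Vec d) (α : ℝ → Ω → A) : ℝ :=
  ∫ ω, (∫ t in Ioi (0 : ℝ), Real.exp (-β * t) * f (X t ω) (P.map (X t)) (α t ω)) ∂P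

/-- Finite-horizon expected running reward
`E[∫_t^T f(X_s, P_{X_s}, α_s) ds]`, written for the solution process `X`. -/
def finJ {Ω : Type*} {m0 : MeasurableSpace Ω} (P : Measure Ω) {d : ℕ} {A : Type*}
    (f : Vec d → Measure (Vec d) → A → ℝ) (t T : ℝ)
    (X : ℝ → Ω → Vec d) (α : ℝ → Ω → A) : ℝ :=
  ∫ ω, (∫ s in t..T, f (X s ω) (P.map (X s)) (α s ω)) ∂P

/-- Ergodic (long term average) reward
`J_∞(ξ,α) = limsup_{T→∞} E[(1/T) ∫₀^T f(X_t, P_{X_t}, α_t) dt]`. -/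
def ergJ {Ω : Type*} {m0 : MeasurableSpace Ω} (P : Measure Ω) {d : ℕ} {A : Type*}
    (f : Vec d → Measure (Vec d) → A → ℝ)
    (X : ℝ → Ω → Vec d) (α : ℝ → Ω → A) : ℝ :=
  Filter.limsup (fun T : ℝ => (1 / T) * finJ P f 0 T X α) Filter.atTop

/-!
Along `β = 1 / (n + 1)` the functions `μ ↦ v β μ - v β δ₀` are equi-Lipschitz for `W₂` and
vanish at `δ₀`, and `β v β δ₀` stays in `[-M_f, M_f]`, so the statement is an Arzelà–Ascoli
extraction: first a subsequence along which `β v β δ₀` converges, then a diagonal subsequence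
converging on a countable `W₂`-dense subset of `P₂(ℝ^d)`. Equi-Lipschitz continuity spreads the
convergence to all of `P₂(ℝ^d)` and makes it uniform on `W₂`-compact sets.

The dense set consists of finitely many atoms at rational points with rational masses, the
missing mass sitting at the origin. A measure of `P₂(ℝ^d)` is first rounded onto a fine grid
inside a large ball (the finite second moment controls what lies outside); on each grid cell a
rational part of the mass is then sent to the grid point and the small rest to the origin. Only
explicit couplings are used, never the triangle inequality for `W₂`.
-/

lemma coe_nnnorm_sq_le_two_mul {E : Type*} [SeminormedAddCommGroup E] (x y : E) :
    (‖x‖₊ : ℝ≥0∞) ^ 2 ≤ 2 * ((‖x - y‖₊ : ℝ≥0∞) ^ 2 + (‖y‖₊ : ℝ≥0∞) ^ 2) := by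
  have h : ‖x‖₊ ^ 2 ≤ 2 * (‖x - y‖₊ ^ 2 + ‖y‖₊ ^ 2) :=
    (pow_le_pow_left₀ (by positivity) ((nnnorm_le_nnnorm_add_nnnorm_sub' x y).trans_eq
      (add_comm _ _)) 2).trans add_sq_le
  exact_mod_cast h

lemma ENNReal.exists_rat_le_and_sub_mul_le {x : ℝ≥0∞} (hx : x ≠ ⊤) {c : ℝ≥0∞} (hc : c ≠ ⊤)
    {ε : ℝ≥0∞} (hε : ε ≠ 0) :
    ∃ q : ℚ, ENNReal.ofReal q ≤ x ∧ (x - ENNReal.ofReal q) * c ≤ ε := by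
  rcases eq_or_ne x 0 with rfl | hx0
  · exact ⟨0, by simp, by simp⟩
  have hη : ε / c ≠ 0 := (ENNReal.div_pos_iff.2 ⟨hε, hc⟩).ne'
  obtain ⟨q, -, hlt, hqx⟩ := ENNReal.lt_iff_exists_rat_btwn.1 (ENNReal.sub_lt_self hx hx0 hη)
  refine ⟨q, hqx.le, ?_⟩
  calc (x - ENNReal.ofReal q) * c ≤ ε / c * c := by
        gcongr
        exact tsub_le_iff_tsub_le.2 hlt.le
    _ = c * (ε / c) := mul_comm _ _
    _ ≤ ε := ENNReal.mul_div_le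

lemma MeasureTheory.Measure.sum_restrict_preimage_singleton {α β : Type*} [MeasurableSpace α]
    [MeasurableSpace β] [MeasurableSingletonClass β] (μ : Measure α) {f : α → β}
    (hf : Measurable f) (s : Finset β) (hs : ∀ x, f x ∈ s) :
    ∑ b ∈ s, μ.restrict (f ⁻¹' {b}) = μ := by
  ext A hA
  have hfib : ∀ b, MeasurableSet (f ⁻¹' {b}) := fun b => hf (measurableSet_singleton b)
  have hcover : f ⁻¹' ↑s = univ := eq_univ_of_forall hs
  simp only [Measure.coe_finsetSum, Finset.sum_apply, Measure.restrict_apply hA, inter_comm A,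
    ← Measure.restrict_apply (hfib _)]
  rw [sum_measure_preimage_singleton s fun b _ => hfib b, hcover, Measure.restrict_apply_univ]

lemma ENNReal.div_mul_cancel_of_le {a b : ℝ≥0∞} (hab : a ≤ b) (hb : b ≠ ⊤) : a / b * b = a := by
  rcases eq_or_ne b 0 with rfl | hb0
  · simp [nonpos_iff_eq_zero.1 hab]
  · exact ENNReal.div_mul_cancel hb0 hb

section EquiLipschitz

variable {X : Type*} {w : X → X → ℝ} {S : Set X} {h : ℕ → X → ℝ} {L : ℝ}

lemma exists_subseq_tendsto_of_countable {D : Set X} (hD : D.Countable)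
    (hbdd : ∀ x ∈ D, ∃ M, ∀ n, |h n x| ≤ M) :
    ∃ ψ : ℕ → ℕ, StrictMono ψ ∧ ∀ x ∈ D, ∃ c, Tendsto (fun n => h (ψ n) x) atTop (𝓝 c) := by
  have := hD.to_subtype
  choose M hM using hbdd
  obtain ⟨c, -, ψ, hψ, hc⟩ := (isCompact_univ_pi fun x : D => isCompact_Icc).tendsto_subseq
    (x := fun n (x : D) => h n x) fun n x _ => abs_le.1 (hM x x.2 n)
  exact ⟨ψ, hψ, fun x hx => ⟨c ⟨x, hx⟩, tendsto_pi_nhds.1 hc ⟨x, hx⟩⟩⟩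

lemma exists_tendsto_of_equiLipschitz_of_dense {D : Set X} (hDS : D ⊆ S)
    (hdense : ∀ x ∈ S, ∀ ε > 0, ∃ y ∈ D, w x y < ε) (hw : ∀ x y, 0 ≤ w x y)
    (hlip : ∀ n, ∀ x ∈ S, ∀ y ∈ S, |h n x - h n y| ≤ L * w x y)
    (hD : ∀ y ∈ D, ∃ c, Tendsto (fun n => h n y) atTop (𝓝 c)) :
    ∀ x ∈ S, ∃ c, Tendsto (fun n => h n x) atTop (𝓝 c) := by
  intro x hx
  refine cauchySeq_tendsto_of_complete (Metric.cauchySeq_iff'.2 fun ε hε => ?_)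
  obtain ⟨y, hyD, hxy⟩ := hdense x hx (ε / (3 * (|L| + 1))) (by positivity)
  obtain ⟨c, hc⟩ := hD y hyD
  obtain ⟨N, hN⟩ := Metric.cauchySeq_iff'.1 hc.cauchySeq (ε / 3) (by positivity)
  have hclose : ∀ m, dist (h m x) (h m y) ≤ ε / 3 := fun m => calc
    dist (h m x) (h m y) ≤ L * w x y := hlip m x hx y (hDS hyD)
    _ ≤ (|L| + 1) * w x y := by nlinarith [hw x y, le_abs_self L]
    _ ≤ (|L| + 1) * (ε / (3 * (|L| + 1))) := by gcongr
    _ = ε / 3 := by field_simp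
  refine ⟨N, fun n hn => ?_⟩
  calc dist (h n x) (h N x) ≤ dist (h n x) (h n y) + dist (h n y) (h N y) + dist (h N y) (h N x) :=
        dist_triangle4 _ _ _ _
    _ < ε := by linarith [hclose n, hN n hn, hclose N, dist_comm (h N y) (h N x)]

lemma tendstoUniformlyOn_of_equiLipschitz {K : Set X} {φ : X → ℝ} (hKS : K ⊆ S)
    (hK : ∀ u : ℕ → X, (∀ n, u n ∈ K) → ∃ (ν : X) (θ : ℕ → ℕ), ν ∈ K ∧ StrictMono θ ∧
      Tendsto (fun n => w (u (θ n)) ν) atTop (𝓝 0))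
    (hlip : ∀ n, ∀ x ∈ S, ∀ y ∈ S, |h n x - h n y| ≤ L * w x y)
    (hφ : ∀ x ∈ S, Tendsto (fun n => h n x) atTop (𝓝 (φ x))) :
    TendstoUniformlyOn h φ atTop K := by
  have hφlip : ∀ x ∈ S, ∀ y ∈ S, |φ x - φ y| ≤ L * w x y := fun x hx y hy =>
    le_of_tendsto ((hφ x hx).sub (hφ y hy)).abs (Eventually.of_forall fun n => hlip n x hx y hy)
  rw [Metric.tendstoUniformlyOn_iff]
  intro ε hε
  by_contra hfar
  obtain ⟨g, hg, hgfar⟩ := extraction_of_frequently_atTop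
    (P := fun n => ∃ x ∈ K, ε ≤ dist (φ x) (h n x)) (by simpa [frequently_atTop] using hfar)
  choose u huK hufar using hgfar
  obtain ⟨ν, θ, hνK, hθ, huν⟩ := hK u huK
  have hν : ν ∈ S := hKS hνK
  have hbound : ∀ j, ε ≤ 2 * (L * w (u (θ j)) ν) + dist (φ ν) (h (g (θ j)) ν) := by
    intro j
    have hu : u (θ j) ∈ S := hKS (huK _)
    have h₁ := hufar (θ j)
    have h₂ := hφlip _ hu ν hν
    have h₃ := hlip (g (θ j)) _ hu ν hν
    rw [Real.dist_eq] at h₁ ⊢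
    have h₄ := abs_sub_le (φ (u (θ j))) (φ ν) (h (g (θ j)) (u (θ j)))
    have h₅ := abs_sub_le (φ ν) (h (g (θ j)) ν) (h (g (θ j)) (u (θ j)))
    rw [abs_sub_comm (h (g (θ j)) ν)] at h₅
    linarith
  have hlim : Tendsto (fun j => 2 * (L * w (u (θ j)) ν) + dist (φ ν) (h (g (θ j)) ν))
      atTop (𝓝 0) := by
    have h₁ := (huν.const_mul L).const_mul 2
    have h₂ := (tendsto_const_nhds (x := φ ν)).dist
      ((hφ ν hν).comp (hg.comp hθ).tendsto_atTop)
    simpa using h₁.add h₂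
  linarith [ge_of_tendsto' hlim hbound]

end EquiLipschitz

section Wasserstein

variable {d : ℕ}

lemma W2_nonneg (μ ν : Measure (Vec d)) : 0 ≤ W2 μ ν := Real.sqrt_nonneg _

lemma W2sq_le_of_isCoupling {π : Measure (Vec d × Vec d)} {μ ν : Measure (Vec d)}
    (h : IsCoupling π μ ν) : W2sq μ ν ≤ ∫⁻ p, (‖p.1 - p.2‖₊ : ℝ≥0∞) ^ 2 ∂π :=
  iInf₂_le π h

lemma W2_lt_of_W2sq_lt {μ ν : Measure (Vec d)} {ε : ℝ} (hε : 0 < ε)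
    (h : W2sq μ ν < ENNReal.ofReal (ε ^ 2)) : W2 μ ν < ε :=
  (Real.sqrt_lt' hε).2 (ENNReal.toReal_lt_of_lt_ofReal h)

lemma memP2_dirac_zero : MemP2 (Measure.dirac (0 : Vec d)) :=
  ⟨inferInstance, by simp [secondMoment, lintegral_dirac]⟩

namespace IsCoupling

variable {π π₁ π₂ : Measure (Vec d × Vec d)} {μ μ₁ μ₂ ν ν₁ ν₂ : Measure (Vec d)}

lemma add (h₁ : IsCoupling π₁ μ₁ ν₁) (h₂ : IsCoupling π₂ μ₂ ν₂) :
    IsCoupling (π₁ + π₂) (μ₁ + μ₂) (ν₁ + ν₂) :=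
  ⟨by rw [Measure.map_add _ _ measurable_fst, h₁.1, h₂.1],
    by rw [Measure.map_add _ _ measurable_snd, h₁.2, h₂.2]⟩

lemma smul (c : ℝ≥0∞) (h : IsCoupling π μ ν) : IsCoupling (c • π) (c • μ) (c • ν) :=
  ⟨by rw [Measure.map_smul, h.1], by rw [Measure.map_smul, h.2]⟩

lemma finset_sum {ι : Type*} (s : Finset ι) {π : ι → Measure (Vec d × Vec d)}
    {μ ν : ι → Measure (Vec d)} (h : ∀ i ∈ s, IsCoupling (π i) (μ i) (ν i)) :
    IsCoupling (∑ i ∈ s, π i) (∑ i ∈ s, μ i) (∑ i ∈ s, ν i) := by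
  classical
  induction s using Finset.induction_on with
  | empty => simp [IsCoupling]
  | insert a s ha ih =>
    simp only [Finset.sum_insert ha]
    exact (h a (s.mem_insert_self a)).add (ih fun i hi => h i (Finset.mem_insert_of_mem hi))

lemma map_prodMk_const (m : Measure (Vec d)) (y : Vec d) :
    IsCoupling (m.map fun x => (x, y)) m (m univ • Measure.dirac y) := by
  have hm : Measurable fun x : Vec d => (x, y) := measurable_id.prodMk measurable_const
  refine ⟨?_, ?_⟩
  · rw [Measure.map_map measurable_fst hm]
    exact Measure.map_id
  · rw [Measure.map_map measurable_snd hm]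
    exact Measure.map_const m y

end IsCoupling

lemma MemP2.of_isCoupling {π : Measure (Vec d × Vec d)} {μ ν : Measure (Vec d)}
    (hμ : MemP2 μ) (h : IsCoupling π μ ν)
    (hcost : ∫⁻ p, (‖p.1 - p.2‖₊ : ℝ≥0∞) ^ 2 ∂π ≠ ⊤) : MemP2 ν := by
  have hmoment : ∀ {m : Measure (Vec d)} {f : Vec d × Vec d → Vec d}, Measurable f →
      π.map f = m → secondMoment m = ∫⁻ p, (‖f p‖₊ : ℝ≥0∞) ^ 2 ∂π := by
    rintro m f hf rfl
    exact lintegral_map (by fun_prop) hf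
  refine ⟨⟨?_⟩, ?_⟩
  · rw [← h.2, Measure.map_apply measurable_snd .univ, preimage_univ,
      ← preimage_univ (f := Prod.fst), ← Measure.map_apply measurable_fst .univ, h.1]
    exact hμ.1.measure_univ
  · calc secondMoment ν = ∫⁻ p, (‖p.2‖₊ : ℝ≥0∞) ^ 2 ∂π := hmoment measurable_snd h.2
      _ ≤ ∫⁻ p, 2 * ((‖p.1 - p.2‖₊ : ℝ≥0∞) ^ 2 + (‖p.1‖₊ : ℝ≥0∞) ^ 2) ∂π :=
          lintegral_mono fun p => (coe_nnnorm_sq_le_two_mul p.2 p.1).trans_eq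
            (by rw [← nnnorm_neg (p.2 - p.1), neg_sub])
      _ = 2 * (∫⁻ p, (‖p.1 - p.2‖₊ : ℝ≥0∞) ^ 2 ∂π + secondMoment μ) := by
          rw [lintegral_const_mul _ (by fun_prop), lintegral_add_right _ (by fun_prop),
            hmoment measurable_fst h.1]
      _ < ⊤ := ENNReal.mul_lt_top ENNReal.ofNat_lt_top
          (ENNReal.add_lt_top.2 ⟨hcost.lt_top, hμ.2⟩)

end Wasserstein

section RationalAtoms

variable {d : ℕ}

def ratPoint (p : Fin d → ℚ) : Vec d := WithLp.toLp 2 fun i => (p i : ℝ)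

def ratAtoms (t : Finset ((Fin d → ℚ) × ℚ)) : Measure (Vec d) :=
  ∑ a ∈ t, ENNReal.ofReal a.2 • Measure.dirac (ratPoint a.1)
    + (1 - ∑ a ∈ t, ENNReal.ofReal a.2) • Measure.dirac 0

def splitCoupling (m : Measure (Vec d)) (a : ℝ≥0∞) (y : Vec d) : Measure (Vec d × Vec d) :=
  a • m.map (fun x => (x, y)) + (1 - a) • m.map (fun x => (x, 0))

lemma isCoupling_splitCoupling (m : Measure (Vec d)) {a : ℝ≥0∞} (ha : a ≤ 1) (y : Vec d) :
    IsCoupling (splitCoupling m a y) m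
      ((a * m univ) • Measure.dirac y + ((1 - a) * m univ) • Measure.dirac 0) := by
  have h := ((IsCoupling.map_prodMk_const m y).smul a).add
    ((IsCoupling.map_prodMk_const m 0).smul (1 - a))
  rwa [← add_smul, add_tsub_cancel_of_le ha, one_smul, smul_smul, smul_smul] at h

lemma lintegral_splitCoupling_le (m : Measure (Vec d)) {a : ℝ≥0∞} (ha : a ≤ 1) (y : Vec d) :
    ∫⁻ p, (‖p.1 - p.2‖₊ : ℝ≥0∞) ^ 2 ∂(splitCoupling m a y)
      ≤ 3 * ∫⁻ x, (‖x - y‖₊ : ℝ≥0∞) ^ 2 ∂m + 2 * ((1 - a) * m univ) * (‖y‖₊ : ℝ≥0∞) ^ 2 := by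
  set I := ∫⁻ x, (‖x - y‖₊ : ℝ≥0∞) ^ 2 ∂m
  have hnorm : ∫⁻ x, (‖x‖₊ : ℝ≥0∞) ^ 2 ∂m ≤ 2 * (I + (‖y‖₊ : ℝ≥0∞) ^ 2 * m univ) :=
    (lintegral_mono fun x => coe_nnnorm_sq_le_two_mul x y).trans_eq (by
      rw [lintegral_const_mul _ (by fun_prop), lintegral_add_right _ measurable_const,
        lintegral_const])
  rw [splitCoupling, lintegral_add_measure, lintegral_smul_measure, lintegral_smul_measure,
    lintegral_map (by fun_prop) (by fun_prop), lintegral_map (by fun_prop) (by fun_prop)]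
  simp only [sub_zero, smul_eq_mul]
  calc a * I + (1 - a) * ∫⁻ x, (‖x‖₊ : ℝ≥0∞) ^ 2 ∂m
      ≤ 1 * I + (1 - a) * (2 * (I + (‖y‖₊ : ℝ≥0∞) ^ 2 * m univ)) := by gcongr
    _ = I + 2 * ((1 - a) * I) + 2 * ((1 - a) * m univ) * (‖y‖₊ : ℝ≥0∞) ^ 2 := by ring
    _ ≤ I + 2 * (1 * I) + 2 * ((1 - a) * m univ) * (‖y‖₊ : ℝ≥0∞) ^ 2 := by
        gcongr
        exact tsub_le_self
    _ = 3 * I + 2 * ((1 - a) * m univ) * (‖y‖₊ : ℝ≥0∞) ^ 2 := by ring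

def cellCoupling (μ : Measure (Vec d)) (Q : Vec d → Fin d → ℚ) (F : Finset (Fin d → ℚ))
    (q : (Fin d → ℚ) → ℚ) : Measure (Vec d × Vec d) :=
  ∑ p ∈ F, splitCoupling (μ.restrict (Q ⁻¹' {p})) (ENNReal.ofReal (q p) / μ (Q ⁻¹' {p}))
    (ratPoint p)

section CellCoupling

variable (μ : Measure (Vec d)) {Q : Vec d → Fin d → ℚ} (hQ : Measurable Q)
  {F : Finset (Fin d → ℚ)} (hF : ∀ x, Q x ∈ F) {q : (Fin d → ℚ) → ℚ}
  (hq : ∀ p, ENNReal.ofReal (q p) ≤ μ (Q ⁻¹' {p}))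
include hQ hF hq

lemma isCoupling_cellCoupling [IsProbabilityMeasure μ] :
    IsCoupling (cellCoupling μ Q F q) μ (ratAtoms (F.image fun p => (p, q p))) := by
  classical
  have hmass : ∑ p ∈ F, μ (Q ⁻¹' {p}) = 1 := by
    rw [sum_measure_preimage_singleton F fun p _ => hQ (measurableSet_singleton p),
      show Q ⁻¹' F = univ from eq_univ_of_forall hF, measure_univ]
  have hdeficit : ∑ p ∈ F, (μ (Q ⁻¹' {p}) - ENNReal.ofReal (q p))
      = 1 - ∑ p ∈ F, ENNReal.ofReal (q p) := by
    refine ENNReal.eq_sub_of_add_eq (ENNReal.sum_ne_top.2 fun _ _ => ENNReal.ofReal_ne_top) ?_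
    rw [← Finset.sum_add_distrib, ← hmass]
    exact Finset.sum_congr rfl fun p _ => tsub_add_cancel_of_le (hq p)
  have h := IsCoupling.finset_sum F fun p _ => isCoupling_splitCoupling (μ.restrict (Q ⁻¹' {p}))
    (ENNReal.div_le_of_le_mul (by simpa using hq p)) (ratPoint p)
  rw [μ.sum_restrict_preimage_singleton hQ F hF] at h
  rw [cellCoupling]
  convert h using 1
  simp only [Measure.restrict_apply_univ, ENNReal.sub_mul fun _ _ => measure_ne_top μ _, one_mul,
    ENNReal.div_mul_cancel_of_le (hq _) (measure_ne_top μ _), Finset.sum_add_distrib,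
    ← Finset.sum_smul, ratAtoms]
  rw [Finset.sum_image fun p _ p' _ h => congrArg Prod.fst h,
    Finset.sum_image fun p _ p' _ h => congrArg Prod.fst h, hdeficit]

lemma lintegral_cellCoupling_le [IsFiniteMeasure μ] :
    ∫⁻ z, (‖z.1 - z.2‖₊ : ℝ≥0∞) ^ 2 ∂cellCoupling μ Q F q
      ≤ 3 * ∫⁻ x, (‖x - ratPoint (Q x)‖₊ : ℝ≥0∞) ^ 2 ∂μ
        + ∑ p ∈ F, (μ (Q ⁻¹' {p}) - ENNReal.ofReal (q p)) * (2 * (‖ratPoint p‖₊ : ℝ≥0∞) ^ 2) := by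
  have hcell : ∀ p, ∫⁻ x in Q ⁻¹' {p}, (‖x - ratPoint p‖₊ : ℝ≥0∞) ^ 2 ∂μ
      = ∫⁻ x in Q ⁻¹' {p}, (‖x - ratPoint (Q x)‖₊ : ℝ≥0∞) ^ 2 ∂μ := fun p =>
    setLIntegral_congr_fun (hQ (measurableSet_singleton p)) fun x (hx : Q x = p) => by rw [hx]
  have hsum : ∫⁻ x, (‖x - ratPoint (Q x)‖₊ : ℝ≥0∞) ^ 2 ∂μ
      = ∑ p ∈ F, ∫⁻ x in Q ⁻¹' {p}, (‖x - ratPoint (Q x)‖₊ : ℝ≥0∞) ^ 2 ∂μ := by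
    rw [← lintegral_finsetSum_measure, μ.sum_restrict_preimage_singleton hQ F hF]
  rw [cellCoupling, lintegral_finsetSum_measure, hsum, Finset.mul_sum, ← Finset.sum_add_distrib]
  refine Finset.sum_le_sum fun p _ => (lintegral_splitCoupling_le _
    (ENNReal.div_le_of_le_mul (by simpa using hq p)) _).trans_eq ?_
  rw [Measure.restrict_apply_univ, ENNReal.sub_mul fun _ _ => measure_ne_top μ _, one_mul,
    ENNReal.div_mul_cancel_of_le (hq p) (measure_ne_top μ _), hcell]
  ring

end CellCoupling

lemma exists_isCoupling_ratAtoms (μ : Measure (Vec d)) [IsProbabilityMeasure μ]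
    {Q : Vec d → Fin d → ℚ} (hQ : Measurable Q) (hQfin : (range Q).Finite) {δ : ℝ≥0∞}
    (hδ : δ ≠ 0) :
    ∃ (t : Finset ((Fin d → ℚ) × ℚ)) (π : Measure (Vec d × Vec d)),
      IsCoupling π μ (ratAtoms t) ∧
      ∫⁻ p, (‖p.1 - p.2‖₊ : ℝ≥0∞) ^ 2 ∂π
        ≤ 3 * ∫⁻ x, (‖x - ratPoint (Q x)‖₊ : ℝ≥0∞) ^ 2 ∂μ + δ := by
  set F := hQfin.toFinset
  have hF : ∀ x, Q x ∈ F := fun x => hQfin.mem_toFinset.2 (mem_range_self x)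
  have hδF : δ / F.card ≠ 0 := (ENNReal.div_pos_iff.2 ⟨hδ, ENNReal.natCast_ne_top _⟩).ne'
  choose q hq hqerr using fun p => ENNReal.exists_rat_le_and_sub_mul_le
    (measure_ne_top μ (Q ⁻¹' {p})) (c := 2 * (‖ratPoint p‖₊ : ℝ≥0∞) ^ 2) (by finiteness) hδF
  refine ⟨F.image fun p => (p, q p), cellCoupling μ Q F q, isCoupling_cellCoupling μ hQ hF hq,
    (lintegral_cellCoupling_le μ hQ hF hq).trans ?_⟩
  calc _ ≤ 3 * ∫⁻ x, (‖x - ratPoint (Q x)‖₊ : ℝ≥0∞) ^ 2 ∂μ + ∑ _p ∈ F, δ / F.card := by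
        gcongr with p
        exact hqerr p
    _ ≤ _ := by
        rw [Finset.sum_const, nsmul_eq_mul]
        gcongr
        exact ENNReal.mul_div_le

def gridRound (N : ℕ) (x : Vec d) : Fin d → ℚ :=
  if ‖x‖ ≤ N then fun i => (⌊x i * (N + 1)⌋ : ℚ) / (N + 1) else 0

lemma measurable_gridRound (N : ℕ) : Measurable (gridRound (d := d) N) := by
  refine Measurable.ite (measurableSet_le (by fun_prop) measurable_const) ?_ measurable_const
  refine measurable_pi_lambda _ fun i => ?_
  exact (measurable_from_top : Measurable fun z : ℤ => (z : ℚ) / (N + 1)).comp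
    ((by fun_prop : Measurable fun x : Vec d => x i * (N + 1)).floor)

lemma finite_range_gridRound (N : ℕ) : (range (gridRound (d := d) N)).Finite := by
  set K : ℤ := N * (N + 1)
  refine (Set.Finite.pi (t := fun _ : Fin d => (fun z : ℤ => (z : ℚ) / (N + 1)) '' Icc (-K) K)
    fun _ => (finite_Icc _ _).image _).subset ?_
  rintro _ ⟨x, rfl⟩ i -
  by_cases hx : ‖x‖ ≤ N
  · refine ⟨⌊x i * (N + 1)⌋, ⟨?_, ?_⟩, by simp [gridRound, hx]⟩
    · have : -(N : ℝ) ≤ x i := (neg_le_of_abs_le ((PiLp.norm_apply_le x i).trans hx))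
      rw [Int.le_floor]
      push_cast [K]
      nlinarith
    · have : x i ≤ N := (le_abs_self _).trans ((PiLp.norm_apply_le x i).trans hx)
      rw [← Int.cast_le (R := ℝ)]
      push_cast [K]
      nlinarith [Int.floor_le (x i * (N + 1))]
  · exact ⟨0, by simp [K], by simp [gridRound, hx]⟩

lemma coe_nnnorm_sub_ratPoint_gridRound_sq_le {N : ℕ} {x : Vec d} (hx : ‖x‖ ≤ N) :
    (‖x - ratPoint (gridRound N x)‖₊ : ℝ≥0∞) ^ 2 ≤ ENNReal.ofReal (d * (1 / (N + 1)) ^ 2) := by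
  rw [← enorm_eq_nnnorm, ← ofReal_norm, ← ENNReal.ofReal_pow (norm_nonneg _)]
  refine ENNReal.ofReal_le_ofReal ?_
  have hN : (0 : ℝ) < N + 1 := by positivity
  have hcoord : ∀ i, ‖(x - ratPoint (gridRound N x)) i‖ ^ 2 ≤ (1 / (N + 1)) ^ 2 := by
    intro i
    have h1 := Int.floor_le (x i * (N + 1))
    have h2 := Int.lt_floor_add_one (x i * (N + 1))
    simp only [gridRound, hx, if_true, ratPoint, PiLp.sub_apply, Real.norm_eq_abs, sq_abs]
    push_cast
    refine pow_le_pow_left₀ ?_ ?_ 2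
    · rw [sub_nonneg, div_le_iff₀ hN]; exact h1
    · rw [sub_le_iff_le_add, ← add_div, le_div_iff₀ hN]; linarith
  calc ‖x - ratPoint (gridRound N x)‖ ^ 2
      = ∑ i, ‖(x - ratPoint (gridRound N x)) i‖ ^ 2 := EuclideanSpace.norm_sq_eq _
    _ ≤ ∑ _i : Fin d, (1 / ((N : ℝ) + 1)) ^ 2 := Finset.sum_le_sum fun i _ => hcoord i
    _ = d * (1 / (N + 1)) ^ 2 := by simp

lemma ratPoint_gridRound_of_lt {N : ℕ} {x : Vec d} (hx : N < ‖x‖) :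
    ratPoint (gridRound N x) = 0 := by
  ext i
  simp [gridRound, hx.not_ge, ratPoint]

lemma tendsto_lintegral_gridRound {μ : Measure (Vec d)} (hμ : MemP2 μ) :
    Tendsto (fun N : ℕ => ∫⁻ x, (‖x - ratPoint (gridRound N x)‖₊ : ℝ≥0∞) ^ 2 ∂μ)
      atTop (𝓝 0) := by
  have := hμ.1
  have hmeas : ∀ N : ℕ, Measurable fun x : Vec d => (‖x - ratPoint (gridRound N x)‖₊ : ℝ≥0∞) ^ 2 :=
    fun N => ((measurable_id.sub ((measurable_of_countable ratPoint).comp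
      (measurable_gridRound N))).nnnorm.coe_nnreal_ennreal).pow_const 2
  have hbound : ∀ (N : ℕ) (x : Vec d), (‖x - ratPoint (gridRound N x)‖₊ : ℝ≥0∞) ^ 2
      ≤ ENNReal.ofReal d + (‖x‖₊ : ℝ≥0∞) ^ 2 := by
    intro N x
    rcases le_or_gt ‖x‖ N with hx | hx
    · refine (coe_nnnorm_sub_ratPoint_gridRound_sq_le hx).trans (le_add_right ?_)
      refine ENNReal.ofReal_le_ofReal (mul_le_of_le_one_right (Nat.cast_nonneg d) ?_)
      exact pow_le_one₀ (by positivity) ((div_le_one (by positivity)).2 (by simp))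
    · rw [ratPoint_gridRound_of_lt hx, sub_zero]
      exact le_add_self
  have hlim : ∀ x : Vec d,
      Tendsto (fun N : ℕ => (‖x - ratPoint (gridRound N x)‖₊ : ℝ≥0∞) ^ 2) atTop (𝓝 0) := by
    intro x
    have hgrid : Tendsto (fun N : ℕ => ENNReal.ofReal (d * (1 / (N + 1)) ^ 2)) atTop (𝓝 0) := by
      simpa using ENNReal.tendsto_ofReal
        ((tendsto_one_div_add_atTop_nhds_zero_nat.pow 2).const_mul (d : ℝ))
    refine tendsto_of_tendsto_of_tendsto_of_le_of_le' tendsto_const_nhds hgrid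
      (Eventually.of_forall fun _ => zero_le) ?_
    filter_upwards [eventually_ge_atTop ⌈‖x‖⌉₊] with N hN
    exact coe_nnnorm_sub_ratPoint_gridRound_sq_le ((Nat.le_ceil _).trans (by exact_mod_cast hN))
  have hint : ∫⁻ x, (ENNReal.ofReal d + (‖x‖₊ : ℝ≥0∞) ^ 2) ∂μ ≠ ⊤ := by
    rw [lintegral_add_left measurable_const, lintegral_const]
    exact ENNReal.add_ne_top.2 ⟨by finiteness, hμ.2.ne⟩
  simpa using tendsto_lintegral_of_dominated_convergence _ hmeas
    (fun N => Eventually.of_forall (hbound N)) hint (Eventually.of_forall hlim)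

theorem exists_countable_dense_memP2 :
    ∃ D : Set (Measure (Vec d)), D.Countable ∧ (∀ ν ∈ D, MemP2 ν) ∧
      ∀ μ, MemP2 μ → ∀ ε > 0, ∃ ν ∈ D, W2 μ ν < ε := by
  refine ⟨{ν | MemP2 ν} ∩ range ratAtoms, (countable_range _).mono inter_subset_right,
    fun ν hν => hν.1, fun μ hμ ε hε => ?_⟩
  have := hμ.1
  set e := ENNReal.ofReal (ε ^ 2)
  have he : e ≠ 0 := by positivity
  obtain ⟨N, hN⟩ := ((tendsto_lintegral_gridRound hμ).eventually_lt_const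
    (ENNReal.div_pos (ENNReal.div_pos he (by norm_num)).ne' (by norm_num) :
      (0 : ℝ≥0∞) < e / 2 / 3)).exists
  obtain ⟨t, π, hπ, hcost⟩ :=
    exists_isCoupling_ratAtoms μ (measurable_gridRound N) (finite_range_gridRound N)
      (ENNReal.half_pos he).ne'
  have hcost' : ∫⁻ p, (‖p.1 - p.2‖₊ : ℝ≥0∞) ^ 2 ∂π < e := by
    refine hcost.trans_lt ?_
    calc 3 * ∫⁻ x, (‖x - ratPoint (gridRound N x)‖₊ : ℝ≥0∞) ^ 2 ∂μ + e / 2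
        < e / 2 + e / 2 := by
          gcongr
          · finiteness
          · rw [mul_comm]
            exact (ENNReal.lt_div_iff_mul_lt (by simp) (by simp)).1 hN
      _ = e := ENNReal.add_halves e
  exact ⟨ratAtoms t, ⟨hμ.of_isCoupling hπ (hcost'.trans ENNReal.ofReal_lt_top).ne, t, rfl⟩,
    W2_lt_of_W2sq_lt hε ((W2sq_le_of_isCoupling hπ).trans_lt hcost')⟩

end RationalAtoms

theorem vanishing_discount_construction_general
    {d : ℕ}
    (Mf : ℝ)
    (v : ℝ → Measure (Vec d) → ℝ)
    (hvB : ∀ β : ℝ, 0 < β → ∀ μ : Measure (Vec d), MemP2 μ → β * |v β μ| ≤ Mf)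
    (L : ℝ)
    (hvLip : ∀ β : ℝ, 0 < β → ∀ μ ν : Measure (Vec d), MemP2 μ → MemP2 ν →
      |v β μ - v β ν| ≤ L * W2 μ ν)
    :
    ∃ (βseq : ℕ → ℝ) (lam : ℝ) (φ : Measure (Vec d) → ℝ),
      (∀ n, 0 < βseq n) ∧ Tendsto βseq atTop (𝓝 0) ∧
      Tendsto (fun n => βseq n * v (βseq n) (Measure.dirac 0)) atTop (𝓝 lam) ∧
      (∀ K : Set (Measure (Vec d)), W2SeqCompact K →
        TendstoUniformlyOn (fun n μ => v (βseq n) μ - v (βseq n) (Measure.dirac 0))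
          φ atTop K) ∧
      (∀ μ : Measure (Vec d), MemP2 μ → |φ μ| ≤ L * W2 μ (Measure.dirac 0)) ∧
      (∀ μ ν : Measure (Vec d), MemP2 μ → MemP2 ν → |φ μ - φ ν| ≤ L * W2 μ ν) := by
  obtain ⟨D, hDcount, hDP2, hDdense⟩ := exists_countable_dense_memP2 (d := d)
  set β : ℕ → ℝ := fun n => 1 / (n + 1)
  have hβ : ∀ n, 0 < β n := fun n => Nat.one_div_pos_of_nat
  set h : ℕ → Measure (Vec d) → ℝ := fun n μ => v (β n) μ - v (β n) (Measure.dirac 0)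
  have hlip : ∀ n, ∀ μ ∈ {μ | MemP2 μ}, ∀ ν ∈ {μ | MemP2 μ}, |h n μ - h n ν| ≤ L * W2 μ ν :=
    fun n μ hμ ν hν => by
      simpa only [h, sub_sub_sub_cancel_right] using hvLip _ (hβ n) μ ν hμ hν
  have hbound : ∀ n μ, MemP2 μ → |h n μ| ≤ L * W2 μ (Measure.dirac 0) :=
    fun n μ hμ => hvLip _ (hβ n) μ _ hμ memP2_dirac_zero
  obtain ⟨lam, -, ψ₁, hψ₁, hlam⟩ := (isCompact_Icc (a := -Mf) (b := Mf)).tendsto_subseq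
    (x := fun n => β n * v (β n) (Measure.dirac 0)) fun n => abs_le.1 <| by
      rw [abs_mul, abs_of_pos (hβ n)]
      exact hvB _ (hβ n) _ memP2_dirac_zero
  obtain ⟨ψ₂, hψ₂, hconvD⟩ := exists_subseq_tendsto_of_countable (h := fun n => h (ψ₁ n))
    hDcount fun μ hμ => ⟨_, fun n => hbound (ψ₁ n) μ (hDP2 μ hμ)⟩
  have hconv := exists_tendsto_of_equiLipschitz_of_dense hDP2 hDdense W2_nonneg
    (fun n => hlip (ψ₁ (ψ₂ n))) hconvD
  set φ := fun μ => limUnder atTop fun n => h (ψ₁ (ψ₂ n)) μ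
  have hφ : ∀ μ ∈ {μ | MemP2 μ}, Tendsto (fun n => h (ψ₁ (ψ₂ n)) μ) atTop (𝓝 (φ μ)) :=
    fun μ hμ => tendsto_nhds_limUnder (hconv μ hμ)
  refine ⟨β ∘ ψ₁ ∘ ψ₂, lam, φ, fun n => hβ _,
    tendsto_one_div_add_atTop_nhds_zero_nat.comp (hψ₁.comp hψ₂).tendsto_atTop,
    hlam.comp hψ₂.tendsto_atTop,
    fun K hK => tendstoUniformlyOn_of_equiLipschitz hK.1 hK.2 (fun n => hlip (ψ₁ (ψ₂ n))) hφ,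
    fun μ hμ => le_of_tendsto (hφ μ hμ).abs (Eventually.of_forall fun n => hbound _ μ hμ),
    fun μ ν hμ hν => le_of_tendsto ((hφ μ hμ).sub (hφ ν hν)).abs
      (Eventually.of_forall fun n => hlip _ μ hμ ν hν)⟩

theorem vanishing_discount_construction
    {Ω : Type*} {m0 : MeasurableSpace Ω} (P : Measure Ω) [IsProbabilityMeasure P]
    (F : Filtration ℝ m0) {d m : ℕ} (B : ℝ → Ω → (Fin m → ℝ)) (hB : IsBM P F B)
    (G : MeasurableSpace Ω) (hG : G ≤ F 0)
    {A : Type*} [MeasurableSpace A] [TopologicalSpace A] [PolishSpace A] [BorelSpace A]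
    [Nonempty A]
    (b : Vec d → Measure (Vec d) → A → Vec d)
    (σ : Vec d → Measure (Vec d) → A → Matrix (Fin d) (Fin m) ℝ)
    (Lbx Lbμ Lσx Lσμ M : ℝ) (hcoef : StandingCoeffs b σ Lbx Lbμ Lσx Lσμ M)
    (η : ℝ) (hdiss : Dissipative P b σ η)
    (f : Vec d → Measure (Vec d) → A → ℝ) (Mf Lf : ℝ)
    (hf : RewardAssumptions f Mf Lf)
    (Xsol : ℝ → (Ω → Vec d) → (ℝ → Ω → A) → ℝ → Ω → Vec d)
    (hXsol : ∀ (t : ℝ) (ξ : Ω → Vec d) (α : ℝ → Ω → A) (T : ℝ), 0 ≤ t → t ≤ T →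
      StronglyMeasurable[F t] ξ → MemLp ξ 2 P → IsAdmissible F α →
      IsSol P F b σ t T ξ α (Xsol t ξ α))
    (hrich : ∀ μ : Measure (Vec d), MemP2 μ →
      ∃ ξ : Ω → Vec d, StronglyMeasurable[G] ξ ∧ MemLp ξ 2 P ∧ law P ξ = μ)
    (v : ℝ → Measure (Vec d) → ℝ)
    (hv : ∀ β : ℝ, 0 < β → ∀ μ : Measure (Vec d), MemP2 μ →
      ∀ ξ : Ω → Vec d, StronglyMeasurable[G] ξ → MemLp ξ 2 P → law P ξ = μ →
      v β μ = ⨆ α : {α : ℝ → Ω → A // IsAdmissible F α}, discJ P f β (Xsol 0 ξ α.1) α.1)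
    (hvB : ∀ β : ℝ, 0 < β → ∀ μ : Measure (Vec d), MemP2 μ → β * |v β μ| ≤ Mf)
    (L : ℝ)
    (hvLip : ∀ β : ℝ, 0 < β → ∀ μ ν : Measure (Vec d), MemP2 μ → MemP2 ν →
      |v β μ - v β ν| ≤ L * W2 μ ν)
    :
    ∃ (βseq : ℕ → ℝ) (lam : ℝ) (φ : Measure (Vec d) → ℝ),
      (∀ n, 0 < βseq n) ∧ Tendsto βseq atTop (𝓝 0) ∧
      Tendsto (fun n => βseq n * v (βseq n) (Measure.dirac 0)) atTop (𝓝 lam) ∧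
      (∀ K : Set (Measure (Vec d)), W2SeqCompact K →
        TendstoUniformlyOn (fun n μ => v (βseq n) μ - v (βseq n) (Measure.dirac 0))
          φ atTop K) ∧
      (∀ μ : Measure (Vec d), MemP2 μ → |φ μ| ≤ L * W2 μ (Measure.dirac 0)) ∧
      (∀ μ ν : Measure (Vec d), MemP2 μ → MemP2 ν → |φ μ - φ ν| ≤ L * W2 μ ν) :=
  vanishing_discount_construction_general Mf v hvB L hvLip
end
end
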